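/- Let {hₖ}_{k≥1} be a sequence in a Hilbert space H and {aₖ}_{k≥1} a sequence in [0,1). If there exists c ≥ 0 such that ‖h_{k+1} + Σ_{i=1}^k aᵢ hᵢ‖ ≤ c for all k ≥ 1, then sup_{k≥1} ‖hₖ‖ ≤ ‖h₁‖ + 2c. -/
import Mathlib


theorem stmt2 {H : Type*} [NormedAddCommGroup H] [InnerProductSpace ℝ H]
    (h : ℕ → H) (a : ℕ → ℝ) (c : ℝ) (hc : 0 ≤ c)
    (ha : ∀ k, 1 ≤ k → a k ∈ Set.Ico (0:ℝ) 1)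
    (hbound : ∀ k, 1 ≤ k → ‖h (k+1) + ∑ i ∈ Finset.Icc 1 k, a i • h i‖ ≤ c) :
    ∀ k, 1 ≤ k → ‖h k‖ ≤ ‖h 1‖ + 2 * c := by
  have hS : ∀ k, 1 ≤ k → ‖∑ i ∈ Finset.Icc 1 k, a i • h i‖ ≤ max c ‖h 1‖ := by
    intro k hk
    induction k, hk using Nat.le_induction with
    | base =>
      simp only [Finset.Icc_self, Finset.sum_singleton, norm_smul]
      have h1 := ha 1 le_rfl
      calc ‖a 1‖ * ‖h 1‖ ≤ 1 * ‖h 1‖ := by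
            apply mul_le_mul_of_nonneg_right _ (norm_nonneg _)
            rw [Real.norm_eq_abs, abs_of_nonneg h1.1]; exact le_of_lt h1.2
        _ = ‖h 1‖ := one_mul _
        _ ≤ max c ‖h 1‖ := le_max_right _ _
    | succ k hk ih =>
      have hsum : ∑ i ∈ Finset.Icc 1 (k+1), a i • h i
          = a (k+1) • (h (k+1) + ∑ i ∈ Finset.Icc 1 k, a i • h i)
            + (1 - a (k+1)) • (∑ i ∈ Finset.Icc 1 k, a i • h i) := by
        rw [Finset.sum_Icc_succ_top (by omega : 1 ≤ k + 1)]
        rw [smul_add, sub_smul, one_smul]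
        abel
      rw [hsum]
      have hak := ha (k+1) (by omega)
      calc ‖a (k+1) • (h (k+1) + ∑ i ∈ Finset.Icc 1 k, a i • h i)
            + (1 - a (k+1)) • (∑ i ∈ Finset.Icc 1 k, a i • h i)‖
          ≤ ‖a (k+1) • (h (k+1) + ∑ i ∈ Finset.Icc 1 k, a i • h i)‖
            + ‖(1 - a (k+1)) • (∑ i ∈ Finset.Icc 1 k, a i • h i)‖ := norm_add_le _ _
        _ = a (k+1) * ‖h (k+1) + ∑ i ∈ Finset.Icc 1 k, a i • h i‖
            + (1 - a (k+1)) * ‖∑ i ∈ Finset.Icc 1 k, a i • h i‖ := by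
            rw [norm_smul, norm_smul, Real.norm_eq_abs, Real.norm_eq_abs,
              abs_of_nonneg hak.1, abs_of_nonneg (by linarith [hak.2])]
        _ ≤ a (k+1) * (max c ‖h 1‖) + (1 - a (k+1)) * (max c ‖h 1‖) := by
            gcongr
            · exact hak.1
            · exact le_trans (hbound k hk) (le_max_left _ _)
            · linarith [hak.2]
        _ = max c ‖h 1‖ := by ring
  intro k hk
  rcases Nat.lt_or_ge k 2 with hk2 | hk2
  · interval_cases k
    linarith [norm_nonneg (h 1)]
  · obtain ⟨m, rfl⟩ : ∃ m, k = m + 1 := ⟨k - 1, by omega⟩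
    have hm : 1 ≤ m := by omega
    have key : h (m+1) = (h (m+1) + ∑ i ∈ Finset.Icc 1 m, a i • h i)
        - ∑ i ∈ Finset.Icc 1 m, a i • h i := by abel
    calc ‖h (m+1)‖
        ≤ ‖h (m+1) + ∑ i ∈ Finset.Icc 1 m, a i • h i‖
          + ‖∑ i ∈ Finset.Icc 1 m, a i • h i‖ := by
          nth_rewrite 1 [key]; exact norm_sub_le _ _
      _ ≤ c + max c ‖h 1‖ := add_le_add (hbound m hm) (hS m hm)
      _ ≤ ‖h 1‖ + 2 * c := by
          rcases max_cases c ‖h 1‖ with ⟨heq, _⟩ | ⟨heq, _⟩ <;> rw [heq] <;>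
            linarith [norm_nonneg (h 1)]
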